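/- If u is a nonzero finite trigonometric polynomial u = Σ_{n∈N} u_n with all ‖u_n‖ equal and at least two distinct harmonics, then the vectors u and Σ_n n·u_n are linearly independent; consequently the scattered reactive current i_sr = Σ_{n∈N}(⟨u̇_n,i⟩/‖u̇_n‖² − ⟨u̇,i⟩/‖u̇‖²)u̇_n can be nonzero even when the Iliovici current i_I = (⟨u̇,i⟩/‖u̇‖²)u̇ is zero: exhibit i with ⟨u̇,i⟩ = 0 but i_sr ≠ 0. -/

import Mathlib

/-! Over a period, the harmonics `cos (n ω t)` and `sin (n ω t)`, `n ≥ 1`, are orthogonal with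
mean square `1/2`. Testing `a u + b ∑ n u_n = ∑ (a + b n) u_n = 0` against each harmonic gives
`a + b n = 0` for every `n ∈ N`, and two distinct harmonics force `a = b = 0`. Since the `u̇_n`
are orthogonal, `i = u̇_m/‖u̇_m‖² − u̇_k/‖u̇_k‖²` has `⟨u̇_n, i⟩ = δ_{nm} − δ_{nk}`; hence
`⟨u̇, i⟩ = 1 − 1 = 0`, the scattered current of `i` is `i` itself, and `i ≠ 0` because
`⟨u̇_m, i⟩ = 1`. -/

open MeasureTheory intervalIntegral

noncomputable def ip (T : ℝ) (f g : ℝ → ℝ) : ℝ :=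
  (1/T) * ∫ t in (0:ℝ)..T, f t * g t

open Real Finset

section InnerProduct

variable {T : ℝ}

lemma ip_const_mul_left (a : ℝ) (f g : ℝ → ℝ) : ip T (fun t => a * f t) g = a * ip T f g := by
  simp only [ip, mul_assoc, intervalIntegral.integral_const_mul]
  ring

lemma ip_const_mul_right (a : ℝ) (f g : ℝ → ℝ) : ip T f (fun t => a * g t) = a * ip T f g := by
  simp only [ip, mul_left_comm (f _), intervalIntegral.integral_const_mul]
  ring

lemma ip_div_right (f g : ℝ → ℝ) (c : ℝ) : ip T f (fun t => g t / c) = ip T f g / c := by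
  simp only [ip, mul_div_assoc', intervalIntegral.integral_div]

lemma ip_sub_right {f g h : ℝ → ℝ} (hg : IntervalIntegrable (fun t => f t * g t) volume 0 T)
    (hh : IntervalIntegrable (fun t => f t * h t) volume 0 T) :
    ip T f (fun t => g t - h t) = ip T f g - ip T f h := by
  simp only [ip, mul_sub, intervalIntegral.integral_sub hg hh]

lemma ip_sum_left {ι : Type*} {s : Finset ι} {f : ι → ℝ → ℝ} {g : ℝ → ℝ}
    (h : ∀ n ∈ s, IntervalIntegrable (fun t => f n t * g t) volume 0 T) :
    ip T (fun t => ∑ n ∈ s, f n t) g = ∑ n ∈ s, ip T (f n) g := by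
  simp only [ip, sum_mul, intervalIntegral.integral_finsetSum h, mul_sum]

end InnerProduct

section Harmonics

variable {T ω : ℝ}

lemma integral_cos_int_mul (hωT : ω * T = 2 * π) (k : ℤ) :
    ∫ t in (0:ℝ)..T, cos (k * ω * t) = if k = 0 then T else 0 := by
  split_ifs with hk
  · simp [hk]
  have hω : ω ≠ 0 := left_ne_zero_of_mul (by rw [hωT]; positivity)
  rw [integral_comp_mul_left (fun x => cos x) (by simpa [hk] using hω), integral_cos,
    mul_assoc, hωT, sin_periodic.int_mul_eq]
  simp

lemma integral_cos_mul_cos (hωT : ω * T = 2 * π) {n : ℕ} (hn : n ≠ 0) (m : ℕ) :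
    ∫ t in (0:ℝ)..T, cos (n * ω * t) * cos (m * ω * t) = if n = m then T / 2 else 0 := by
  have prod_to_sum (t : ℝ) : cos (n * ω * t) * cos (m * ω * t)
      = (cos (((n - m : ℤ) : ℝ) * ω * t) + cos (((n + m : ℤ) : ℝ) * ω * t)) / 2 := by
    push_cast
    rw [sub_mul, sub_mul, add_mul, add_mul, cos_sub, cos_add]
    ring
  simp only [prod_to_sum]
  rw [intervalIntegral.integral_div,
    intervalIntegral.integral_add (Continuous.intervalIntegrable (by fun_prop) _ _)
      (Continuous.intervalIntegrable (by fun_prop) _ _),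
    integral_cos_int_mul hωT, integral_cos_int_mul hωT]
  split_ifs <;> first | omega | ring

lemma integral_sin_mul_sin (hωT : ω * T = 2 * π) {n : ℕ} (hn : n ≠ 0) (m : ℕ) :
    ∫ t in (0:ℝ)..T, sin (n * ω * t) * sin (m * ω * t) = if n = m then T / 2 else 0 := by
  have sin_mul_sin_eq (t : ℝ) : sin (n * ω * t) * sin (m * ω * t)
      = cos (((n - m : ℤ) : ℝ) * ω * t) - cos (n * ω * t) * cos (m * ω * t) := by
    push_cast
    rw [sub_mul, sub_mul, cos_sub]
    ring
  simp only [sin_mul_sin_eq]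
  rw [intervalIntegral.integral_sub (Continuous.intervalIntegrable (by fun_prop) _ _)
      (Continuous.intervalIntegrable (by fun_prop) _ _),
    integral_cos_int_mul hωT, integral_cos_mul_cos hωT hn]
  split_ifs <;> first | omega | ring

lemma ip_cos_cos (hωT : ω * T = 2 * π) {n : ℕ} (hn : n ≠ 0) (m : ℕ) :
    ip T (fun t => cos (n * ω * t)) (fun t => cos (m * ω * t)) = if n = m then 1 / 2 else 0 := by
  have hT : T ≠ 0 := right_ne_zero_of_mul (by rw [hωT]; positivity)
  rw [ip, integral_cos_mul_cos hωT hn]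
  split_ifs
  · field_simp
  · simp

lemma ip_sin_sin (hωT : ω * T = 2 * π) {n : ℕ} (hn : n ≠ 0) (m : ℕ) :
    ip T (fun t => sin (n * ω * t)) (fun t => sin (m * ω * t)) = if n = m then 1 / 2 else 0 := by
  have hT : T ≠ 0 := right_ne_zero_of_mul (by rw [hωT]; positivity)
  rw [ip, integral_sin_mul_sin hωT hn]
  split_ifs
  · field_simp
  · simp

lemma coeff_eq_zero_of_sum_mul_cos_eq_zero (hωT : ω * T = 2 * π) {N : Finset ℕ}
    (hN : ∀ n ∈ N, 0 < n) {c : ℕ → ℝ} (h : ∀ t, ∑ n ∈ N, c n * cos (n * ω * t) = 0)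
    {p : ℕ} (hp : p ∈ N) : c p = 0 := by
  have h0 : ip T (fun t => ∑ n ∈ N, c n * cos (n * ω * t)) (fun t => cos (p * ω * t)) = 0 := by
    simp [ip, h]
  rw [ip_sum_left fun n _ => Continuous.intervalIntegrable (by fun_prop) _ _,
    sum_congr rfl fun n hn => by rw [ip_const_mul_left, ip_cos_cos hωT (hN n hn).ne']] at h0
  simpa [hp] using h0

end Harmonics

lemma eq_neg_mul_sin_of_hasDerivAt_mul_cos {f : ℝ → ℝ} {A c f' t : ℝ}
    (hf : ∀ t, f t = A * cos (c * t)) (h : HasDerivAt f f' t) :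
    f' = -(A * c) * sin (c * t) := by
  obtain rfl : f = fun t => A * cos (c * t) := funext hf
  rw [h.unique ((((hasDerivAt_id' t).const_mul c).cos).const_mul A)]
  ring

lemma eq_zero_of_add_mul_eq_zero_of_ne {a b x y : ℝ} (hxy : x ≠ y) (hx : a + b * x = 0)
    (hy : a + b * y = 0) : a = 0 ∧ b = 0 := by
  have hb : b = 0 := by
    have : b * (x - y) = 0 := by linarith
    exact (mul_eq_zero.mp this).resolve_right (sub_ne_zero.mpr hxy)
  exact ⟨by simpa [hb] using hx, hb⟩

structure IsOrthogonalFamily (T : ℝ) (N : Finset ℕ) (v : ℕ → ℝ → ℝ) : Prop where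
  continuous : ∀ n ∈ N, Continuous (v n)
  ip_eq_zero : ∀ n ∈ N, ∀ p ∈ N, n ≠ p → ip T (v n) (v p) = 0
  ip_self_ne_zero : ∀ n ∈ N, ip T (v n) (v n) ≠ 0

lemma isOrthogonalFamily_of_eq_const_mul_sin {T ω : ℝ} (hωT : ω * T = 2 * π) {N : Finset ℕ}
    (hN : ∀ n ∈ N, 0 < n) {a : ℕ → ℝ} (ha : ∀ n ∈ N, a n ≠ 0) {v : ℕ → ℝ → ℝ}
    (hv : ∀ n ∈ N, v n = fun t => a n * sin (n * ω * t)) : IsOrthogonalFamily T N v := by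
  have hip {n p : ℕ} (hn : n ∈ N) (hp : p ∈ N) :
      ip T (v n) (v p) = if n = p then a n * a p / 2 else 0 := by
    rw [hv n hn, hv p hp, ip_const_mul_left, ip_const_mul_right, ip_sin_sin hωT (hN n hn).ne']
    split_ifs <;> ring
  refine ⟨fun n hn => hv n hn ▸ by fun_prop, fun n hn p hp hnp => ?_, fun n hn => ?_⟩
  · rw [hip hn hp, if_neg hnp]
  · rw [hip hn hn, if_pos rfl]
    exact div_ne_zero (mul_ne_zero (ha n hn) (ha n hn)) two_ne_zero

-- The paper's `u̇_m/‖u̇_m‖² − u̇_k/‖u̇_k‖²`, with `ip T f f` standing for `‖f‖²`.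
noncomputable def dualDiff (T : ℝ) (v : ℕ → ℝ → ℝ) (m k : ℕ) : ℝ → ℝ :=
  fun t => v m t / ip T (v m) (v m) - v k t / ip T (v k) (v k)

noncomputable def scatteredCurrent (T : ℝ) (N : Finset ℕ) (v : ℕ → ℝ → ℝ) (i : ℝ → ℝ)
    (t : ℝ) : ℝ :=
  let w := fun t => ∑ n ∈ N, v n t
  ∑ n ∈ N, (ip T (v n) i / ip T (v n) (v n) - ip T w i / ip T w w) * v n t

namespace IsOrthogonalFamily

variable {T : ℝ} {N : Finset ℕ} {v : ℕ → ℝ → ℝ} {m k : ℕ}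

lemma ip_div_ip_self (hv : IsOrthogonalFamily T N v) {n p : ℕ} (hn : n ∈ N) (hp : p ∈ N) :
    ip T (v n) (v p) / ip T (v p) (v p) = if n = p then 1 else 0 := by
  split_ifs with hnp
  · subst hnp
    exact div_self (hv.ip_self_ne_zero n hn)
  · rw [hv.ip_eq_zero n hn p hp hnp, zero_div]

lemma ip_dualDiff (hv : IsOrthogonalFamily T N v) (hm : m ∈ N) (hk : k ∈ N) {n : ℕ}
    (hn : n ∈ N) :
    ip T (v n) (dualDiff T v m k) = (if n = m then 1 else 0) - (if n = k then 1 else 0) := by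
  have hint {p : ℕ} (hp : p ∈ N) (c : ℝ) :
      IntervalIntegrable (fun t => v n t * (v p t / c)) volume 0 T :=
    ((hv.continuous n hn).mul ((hv.continuous p hp).div_const c)).intervalIntegrable _ _
  unfold dualDiff
  rw [ip_sub_right (hint hm _) (hint hk _), ip_div_right, ip_div_right,
    hv.ip_div_ip_self hn hm, hv.ip_div_ip_self hn hk]

lemma ip_sum_dualDiff (hv : IsOrthogonalFamily T N v) (hm : m ∈ N) (hk : k ∈ N) :
    ip T (fun t => ∑ n ∈ N, v n t) (dualDiff T v m k) = 0 := by
  rw [ip_sum_left fun n hn => ((hv.continuous n hn).mul ?_).intervalIntegrable _ _,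
    sum_congr rfl fun n hn => hv.ip_dualDiff hm hk hn, sum_sub_distrib, sum_ite_eq', sum_ite_eq',
    if_pos hm, if_pos hk, sub_self]
  exact ((hv.continuous m hm).div_const _).sub ((hv.continuous k hk).div_const _)

lemma scatteredCurrent_dualDiff (hv : IsOrthogonalFamily T N v) (hm : m ∈ N) (hk : k ∈ N) :
    scatteredCurrent T N v (dualDiff T v m k) = dualDiff T v m k := by
  funext t
  have hterm {n : ℕ} (hn : n ∈ N) :
      ip T (v n) (dualDiff T v m k) / ip T (v n) (v n) * v n t
        = (if n = m then v m t / ip T (v m) (v m) else 0)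
          - (if n = k then v k t / ip T (v k) (v k) else 0) := by
    rw [hv.ip_dualDiff hm hk hn]
    split_ifs <;> subst_vars <;> ring
  simp only [scatteredCurrent, hv.ip_sum_dualDiff hm hk, zero_div, sub_zero]
  rw [sum_congr rfl fun n hn => hterm hn, sum_sub_distrib, sum_ite_eq', sum_ite_eq',
    if_pos hm, if_pos hk, dualDiff]

lemma dualDiff_ne_zero (hv : IsOrthogonalFamily T N v) (hm : m ∈ N) (hk : k ∈ N) (hmk : m ≠ k) :
    dualDiff T v m k ≠ 0 := by
  intro h
  have := hv.ip_dualDiff hm hk hm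
  rw [h] at this
  simp [ip, hmk] at this

end IsOrthogonalFamily

theorem scattered_reactive_nonzero (T : ℝ) (hT : 0 < T) (ω : ℝ)
    (hω : ω = 2 * Real.pi / T)
    (N : Finset ℕ) (hcard : 2 ≤ N.card) (hN : ∀ n ∈ N, 0 < n)
    (U : ℝ) (hU : 0 < U)
    (un dun : ℕ → ℝ → ℝ) (u du : ℝ → ℝ)
    (hun : ∀ n ∈ N, ∀ t, un n t = Real.sqrt 2 * U * Real.cos (n * ω * t))
    (hdun : ∀ n ∈ N, ∀ t, HasDerivAt (un n) (dun n t) t)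
    (hu : ∀ t, u t = ∑ n ∈ N, un n t)
    (hdu : ∀ t, du t = ∑ n ∈ N, dun n t) :
    (∀ a b : ℝ, (∀ t, a * u t + b * (∑ n ∈ N, (n : ℝ) * un n t) = 0) →
      a = 0 ∧ b = 0) ∧
    ∃ i : ℝ → ℝ, ip T du i = 0 ∧
      ¬ (∀ t, (∑ n ∈ N,
          (ip T (dun n) i / ip T (dun n) (dun n) - ip T du i / ip T du du)
            * dun n t) = 0) := by
  have hωT : ω * T = 2 * π := by
    rw [hω]
    field_simp
  have hω0 : 0 < ω := by
    rw [hω]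
    positivity
  obtain ⟨m, hm, k, hk, hmk⟩ := one_lt_card.mp hcard
  refine ⟨fun a b hab => ?_, ?_⟩
  · have hcoeff {n : ℕ} (hn : n ∈ N) : (a + b * n) * (√2 * U) = 0 :=
      coeff_eq_zero_of_sum_mul_cos_eq_zero (c := fun n => (a + b * n) * (√2 * U)) hωT hN
        (fun t => by
          rw [← hab t, hu t, mul_sum, mul_sum, ← sum_add_distrib]
          exact sum_congr rfl fun n hn => by rw [hun n hn t]; ring) hn
    have hline {n : ℕ} (hn : n ∈ N) : a + b * n = 0 :=
      (mul_eq_zero.mp (hcoeff hn)).resolve_right (by positivity)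
    exact eq_zero_of_add_mul_eq_zero_of_ne (Nat.cast_injective.ne hmk) (hline hm) (hline hk)
  · have hamp (n : ℕ) (hn : n ∈ N) : -(√2 * U * (n * ω)) ≠ 0 := by
      have : (0 : ℝ) < n := Nat.cast_pos.mpr (hN n hn)
      exact neg_ne_zero.mpr (by positivity)
    have hv : IsOrthogonalFamily T N dun :=
      isOrthogonalFamily_of_eq_const_mul_sin hωT hN hamp fun n hn =>
        funext fun t => eq_neg_mul_sin_of_hasDerivAt_mul_cos (hun n hn) (hdun n hn t)
    obtain rfl : du = fun t => ∑ n ∈ N, dun n t := funext hdu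
    exact ⟨dualDiff T dun m k, hv.ip_sum_dualDiff hm hk, fun h =>
      hv.dualDiff_ne_zero hm hk hmk (hv.scatteredCurrent_dualDiff hm hk ▸ funext h)⟩
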